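/- arXiv:1611.00101 — 3 statements merged into one kernel-verified Lean document; each statement's English description precedes it below -/
import Mathlib

section
/- Let F₂ be the free group on generators a, b, let n ≥ 1, and let w ∈ F₂ be a reduced word with exponent sum k (where the exponent sum homomorphism sends a,b ↦ 1). If |w| + |k| ≤ 2n - 1, then the word length of bⁿa⁻ⁿw is at least 2n - |k|, and hence |bⁿa⁻ⁿw| + |k| ≥ 2n. -/
/-- The generator a of the free group F₂ on two generators. -/
def fa : FreeGroup Bool := FreeGroup.of true
/-- The generator b of the free group F₂ on two generators. -/
def fb : FreeGroup Bool := FreeGroup.of false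

/-- The exponent sum homomorphism F₂ → ℤ sending a, b ↦ 1. -/
def expSum : FreeGroup Bool →* Multiplicative ℤ :=
  FreeGroup.lift fun _ => Multiplicative.ofAdd 1

/-!
Write `w = aˣ w₁` with `w₁` reduced and not starting with `a`. Since `|k - x| ≤ |w₁|`, the
hypothesis `|w| + |k| ≤ 2n - 1` forces `x < n`, so `bⁿ a⁻⁽ⁿ⁻ˣ⁾ w₁` is a reduced word for
`bⁿ a⁻ⁿ w`, of length `2n - x + |w₁| ≥ 2n - |k|`.
-/

theorem List.exists_eq_replicate_append {β : Type*} (c : β) :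
    ∀ L : List β, ∃ (m : ℕ) (L' : List β), L = replicate m c ++ L' ∧ L'.head? ≠ some c
  | [] => ⟨0, [], rfl, by simp⟩
  | p :: L => by
    by_cases hp : p = c
    · obtain ⟨m, L', rfl, hL'⟩ := exists_eq_replicate_append c L
      exact ⟨m + 1, L', by simp [hp, replicate_succ], hL'⟩
    · exact ⟨0, p :: L, rfl, by simpa using hp⟩

namespace FreeGroup

variable {α : Type*}

theorem abs_toAdd_lift_mk_le_length (f : α → Multiplicative ℤ) (hf : ∀ a, |(f a).toAdd| ≤ 1) :
    ∀ L : List (α × Bool), |(lift f (mk L)).toAdd| ≤ L.length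
  | [] => by simp
  | p :: L => by
    have hp : |(lift f (mk [p])).toAdd| ≤ 1 := by
      obtain ⟨a, _ | _⟩ := p <;> simpa [lift_mk] using hf a
    rw [← List.singleton_append, ← mul_mk, MonoidHom.map_mul, toAdd_mul, List.length_append]
    simp only [List.length_singleton, Nat.cast_add, Nat.cast_one]
    linarith [abs_add_le (lift f (mk [p])).toAdd (lift f (mk L)).toAdd,
      abs_toAdd_lift_mk_le_length f hf L]

variable [DecidableEq α]

theorem abs_toAdd_lift_le_norm (f : α → Multiplicative ℤ) (hf : ∀ a, |(f a).toAdd| ≤ 1)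
    (x : FreeGroup α) : |(lift f x).toAdd| ≤ x.norm := by
  have := abs_toAdd_lift_mk_le_length f hf x.toWord
  rwa [mk_toWord] at this

theorem exists_eq_of_pow_mul (a : α) (x : FreeGroup α) :
    ∃ (m : ℕ) (y : FreeGroup α),
      x = of a ^ m * y ∧ x.norm = m + y.norm ∧ y.toWord.head? ≠ some (a, true) := by
  obtain ⟨m, L, hx, hL⟩ := List.exists_eq_replicate_append (a, true) x.toWord
  have hLred : IsReduced L := isReduced_toWord.infix ⟨_, [], by rw [hx, List.append_nil]⟩
  refine ⟨m, mk L, ?_, ?_, by rwa [toWord_mk, hLred.reduce_eq]⟩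
  · rw [← mk_toWord (x := x), hx, ← mul_mk, ← toWord_of_pow, mk_toWord]
  · rw [norm, hx, norm, toWord_mk, hLred.reduce_eq, List.length_append, List.length_replicate]

theorem norm_of_pow_mul_inv_of_pow_mul {a b : α} (hab : a ≠ b) (n : ℕ) {m : ℕ} (hm : m ≠ 0)
    {y : FreeGroup α} (hy : y.toWord.head? ≠ some (a, true)) :
    (of b ^ n * (of a ^ m)⁻¹ * y).norm = n + m + y.norm := by
  set L := List.replicate n (b, true) ++ List.replicate m (a, false) ++ y.toWord
  have hword : of b ^ n * (of a ^ m)⁻¹ * y = mk L := by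
    rw [← mul_mk, ← mul_mk, mk_toWord, ← toWord_of_pow, mk_toWord, ← mk_toWord (x := of a ^ m),
      inv_mk, toWord_of_pow]
    simp [invRev]
  have hred : IsReduced L := by
    rw [IsReduced, List.isChain_append, List.isChain_append]
    refine ⟨⟨List.isChain_replicate_of_rel _ fun _ => rfl,
      List.isChain_replicate_of_rel _ fun _ => rfl, ?_⟩, isReduced_toWord, ?_⟩
    · intro p hp q hq
      obtain rfl := List.eq_of_mem_replicate (List.mem_of_mem_getLast? hp)
      obtain rfl := List.eq_of_mem_replicate (List.mem_of_mem_head? hq)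
      exact fun h => absurd h.symm hab
    · rintro p hp ⟨c, d⟩ hq (rfl : p.1 = c)
      rw [List.getLast?_append_of_ne_nil _ (by simpa using hm)] at hp
      obtain rfl := List.eq_of_mem_replicate (List.mem_of_mem_getLast? hp)
      cases d
      · rfl
      · exact absurd hq hy
  rw [hword, norm, toWord_mk, hred.reduce_eq]
  simp [L, norm, add_assoc]

end FreeGroup

open FreeGroup in
theorem stmt6_general (n : ℕ) (w : FreeGroup Bool) (k : ℤ)
    (hk : expSum w = Multiplicative.ofAdd k)
    (hlen : (w.norm : ℤ) + |k| ≤ 2 * n - 1) :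
    ((fb ^ n * fa ^ (-(n : ℤ)) * w).norm : ℤ) ≥ 2 * n - |k| ∧
    ((fb ^ n * fa ^ (-(n : ℤ)) * w).norm : ℤ) + |k| ≥ 2 * n := by
  obtain ⟨x, w₁, rfl, hnorm, hhead⟩ := exists_eq_of_pow_mul true w
  have hk_eq : k = x + (expSum w₁).toAdd := by
    rw [MonoidHom.map_mul, MonoidHom.map_pow,
      show expSum (of true) = Multiplicative.ofAdd 1 from lift_apply_of] at hk
    simpa [← ofAdd_nsmul, eq_comm] using congrArg Multiplicative.toAdd hk
  have hk_ge : (x : ℤ) - w₁.norm ≤ |k| := by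
    have hw₁ : |(expSum w₁).toAdd| ≤ w₁.norm :=
      abs_toAdd_lift_le_norm (fun _ => Multiplicative.ofAdd 1) (fun _ => by simp) w₁
    linarith [le_abs_self k, neg_abs_le (expSum w₁).toAdd]
  have hxn : x < n := by omega
  have hword : of false ^ n * of true ^ (-(n : ℤ)) * (of true ^ x * w₁) =
      of false ^ n * (of true ^ (n - x))⁻¹ * w₁ := by
    rw [← zpow_natCast _ (n - x), Nat.cast_sub hxn.le, ← zpow_natCast _ x]
    group
  rw [fa, fb, hword, norm_of_pow_mul_inv_of_pow_mul (by decide) n (by omega) hhead]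
  omega

/-- If w ∈ F₂ has exponent sum k and |w| + |k| ≤ 2n - 1 (with n ≥ 1), then
|bⁿa⁻ⁿw| ≥ 2n - |k|, and hence |bⁿa⁻ⁿw| + |k| ≥ 2n. -/
theorem stmt6 (n : ℕ) (hn : 1 ≤ n) (w : FreeGroup Bool) (k : ℤ)
    (hk : expSum w = Multiplicative.ofAdd k)
    (hlen : (w.norm : ℤ) + |k| ≤ 2 * n - 1) :
    ((fb ^ n * fa ^ (-(n : ℤ)) * w).norm : ℤ) ≥ 2 * n - |k| ∧
    ((fb ^ n * fa ^ (-(n : ℤ)) * w).norm : ℤ) + |k| ≥ 2 * n :=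
  stmt6_general n w k hk hlen
end

section
/- Let F₂ be the free group on a,b and k ≥ 1. If r₁, r₂ are reduced words in F₂ with |r₁| ≤ k and |r₂| ≤ k, then the word length of r₁⁻¹ · aᵏ · b⁻⁴ᵏ · aᵏ · r₂ in F₂ is at least 4k + (k - x₁ + |y₁|) + (k + x₂ + |y₂|), where xᵢ and yᵢ are the exponent sums of a and b respectively in rᵢ. In particular it is at least 6k - x₁ + x₂ + |y₁| + |y₂|. -/
/-- The a-exponent sum homomorphism F₂ → ℤ (a ↦ 1, b ↦ 0). -/
def expA : FreeGroup Bool →* Multiplicative ℤ :=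
  FreeGroup.lift fun i => if i then Multiplicative.ofAdd 1 else 1

/-- The b-exponent sum homomorphism F₂ → ℤ (a ↦ 0, b ↦ 1). -/
def expB : FreeGroup Bool →* Multiplicative ℤ :=
  FreeGroup.lift fun i => if i then 1 else Multiplicative.ofAdd 1

open Multiplicative

namespace FreeGroup

theorem norm_induction {α : Type*} [DecidableEq α] {P : FreeGroup α → ℕ → Prop} (one : P 1 0)
    (gen : ∀ a, P (of a) 1) (gen_inv : ∀ a, P (of a)⁻¹ 1)
    (mul : ∀ g h m n, P g m → P h n → P (g * h) (m + n)) (g : FreeGroup α) : P g g.norm := by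
  suffices ∀ L : List (α × Bool), P (mk L) L.length by simpa [norm, mk_toWord] using this g.toWord
  intro L
  induction L with
  | nil => exact one
  | cons x L ih =>
    have hcons : mk (x :: L) = mk [x] * mk L := by rw [mul_mk]; rfl
    rw [hcons, List.length_cons, add_comm]
    refine mul _ _ 1 _ ?_ ih
    obtain ⟨a, _ | _⟩ := x
    · exact gen_inv a
    · exact gen a

end FreeGroup

namespace Finsupp

variable {α : Type*}

def l1Norm (f : α →₀ ℤ) : ℤ := f.sum fun _ v => |v|

theorem l1Norm_eq_sum_of_support_subset {f : α →₀ ℤ} {s : Finset α} (h : f.support ⊆ s) :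
    l1Norm f = ∑ i ∈ s, |f i| :=
  sum_of_support_subset f h _ fun _ _ => abs_zero

theorem l1Norm_nonneg (f : α →₀ ℤ) : 0 ≤ l1Norm f :=
  Finset.sum_nonneg fun _ _ => abs_nonneg _

theorem l1Norm_single (a : α) (v : ℤ) : l1Norm (single a v) = |v| :=
  sum_single_index abs_zero

theorem l1Norm_neg (f : α →₀ ℤ) : l1Norm (-f) = l1Norm f := by
  simp [l1Norm, sum_neg_index]

theorem abs_degree_le_l1Norm (f : α →₀ ℤ) : |degree f| ≤ l1Norm f :=
  Finset.abs_sum_le_sum_abs _ _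

theorem l1Norm_add_le [DecidableEq α] (f g : α →₀ ℤ) : l1Norm (f + g) ≤ l1Norm f + l1Norm g := by
  rw [l1Norm_eq_sum_of_support_subset support_add,
    l1Norm_eq_sum_of_support_subset (f := f) Finset.subset_union_left,
    l1Norm_eq_sum_of_support_subset (f := g) Finset.subset_union_right, ← Finset.sum_add_distrib]
  exact Finset.sum_le_sum fun i _ => abs_add_le _ _

theorem l1Norm_add_of_disjoint {f g : α →₀ ℤ} (h : Disjoint f.support g.support) :
    l1Norm (f + g) = l1Norm f + l1Norm g :=
  sum_add_index_of_disjoint h _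

theorem l1Norm_add_of_lt_of_le [LinearOrder α] {f g : α →₀ ℤ} {m : α}
    (hf : ∀ a ∈ f.support, a < m) (hg : ∀ a ∈ g.support, m ≤ a) :
    l1Norm (f + g) = l1Norm f + l1Norm g :=
  l1Norm_add_of_disjoint (Finset.disjoint_left.mpr fun a ha hb => (hf a ha).not_ge (hg a hb))

theorem l1Norm_mapDomain {β : Type*} {e : α → β} (he : Function.Injective e) (f : α →₀ ℤ) :
    l1Norm (mapDomain e f) = l1Norm f :=
  sum_mapDomain_index_inj he

end Finsupp

open Finsupp SemidirectProduct

attribute [local instance] Finsupp.comapDistribMulAction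

noncomputable def translateLamps : Multiplicative ℤ →* MulAut (Multiplicative (ℤ →₀ ℤ)) :=
  (MulAutMultiplicative (ℤ →₀ ℤ)).symm.toMonoidHom.comp
    (DistribMulAction.toAddAut (Multiplicative ℤ) (ℤ →₀ ℤ))

abbrev ZWreathZ : Type :=
  SemidirectProduct (Multiplicative (ℤ →₀ ℤ)) (Multiplicative ℤ) translateLamps

namespace ZWreathZ

def lamps (x : ZWreathZ) : ℤ →₀ ℤ := toAdd x.left

def cursor (x : ZWreathZ) : ℤ := toAdd x.right

theorem smul_apply (s : Multiplicative ℤ) (f : ℤ →₀ ℤ) (d : ℤ) : (s • f) d = f (d - toAdd s) := by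
  rw [comapSMul_apply, sub_eq_neg_add]
  rfl

theorem l1Norm_smul (s : Multiplicative ℤ) (f : ℤ →₀ ℤ) : l1Norm (s • f) = l1Norm f := by
  rw [comapSMul_def, l1Norm_mapDomain (MulAction.injective s)]

theorem degree_smul (s : Multiplicative ℤ) (f : ℤ →₀ ℤ) : degree (s • f) = degree f := by
  rw [comapSMul_def, degree_mapDomain]

@[simp] theorem lamps_mul (x y : ZWreathZ) : lamps (x * y) = lamps x + x.right • lamps y := rfl

@[simp] theorem cursor_mul (x y : ZWreathZ) : cursor (x * y) = cursor x + cursor y := rfl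

@[simp] theorem cursor_inv (x : ZWreathZ) : cursor x⁻¹ = -cursor x := rfl

@[simp] theorem lamps_inl (f : Multiplicative (ℤ →₀ ℤ)) : lamps (inl f) = toAdd f := rfl

@[simp] theorem lamps_inr (s : Multiplicative ℤ) : lamps (inr s) = 0 := rfl

@[simp] theorem cursor_inl (f : Multiplicative (ℤ →₀ ℤ)) : cursor (inl f) = 0 := rfl

@[simp] theorem cursor_inr (s : Multiplicative ℤ) : cursor (inr s) = toAdd s := rfl

theorem lamps_inv_mul (x y : ZWreathZ) : lamps (x⁻¹ * y) = x.right⁻¹ • (lamps y - lamps x) := by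
  change x.right⁻¹ • -lamps x + x.right⁻¹ • lamps y = _
  rw [← smul_add, neg_add_eq_sub]

noncomputable def lampSum : ZWreathZ →* Multiplicative ℤ :=
  MonoidHom.mk' (fun x => ofAdd (degree (lamps x))) fun x y => by simp [degree_smul]

/-- Satisfied by every product of `n` generators `inr (ofAdd (±1))` and
`inl (ofAdd (single 0 (±1)))`. -/
def IsBoundedBy (x : ZWreathZ) (n : ℕ) : Prop :=
  |cursor x| + l1Norm (lamps x) ≤ n ∧ ∀ d ∈ (lamps x).support, |d| < n

theorem IsBoundedBy.mono {x : ZWreathZ} {m n : ℕ} (hx : IsBoundedBy x m) (hmn : m ≤ n) :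
    IsBoundedBy x n := by
  have hmn' : (m : ℤ) ≤ n := by exact_mod_cast hmn
  exact ⟨hx.1.trans hmn', fun d hd => (hx.2 d hd).trans_le hmn'⟩

theorem isBoundedBy_one : IsBoundedBy 1 0 := by
  simp [IsBoundedBy, lamps, cursor, l1Norm]

theorem isBoundedBy_inl_single {v : ℤ} (hv : |v| ≤ 1) :
    IsBoundedBy (inl (ofAdd (single 0 v))) 1 := by
  refine ⟨by simpa [l1Norm_single] using hv, fun d hd => ?_⟩
  rw [lamps_inl, toAdd_ofAdd] at hd
  simp [Finset.mem_singleton.mp (support_single_subset hd)]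

theorem isBoundedBy_inr {s : ℤ} (hs : |s| ≤ 1) : IsBoundedBy (inr (ofAdd s)) 1 := by
  simpa [IsBoundedBy, l1Norm] using hs

theorem IsBoundedBy.mul {x y : ZWreathZ} {m n : ℕ} (hx : IsBoundedBy x m) (hy : IsBoundedBy y n) :
    IsBoundedBy (x * y) (m + n) := by
  refine ⟨?_, fun d hd => ?_⟩
  · have hl := l1Norm_add_le (lamps x) (x.right • lamps y)
    rw [l1Norm_smul] at hl
    rw [lamps_mul, cursor_mul]
    push_cast
    linarith [abs_add_le (cursor x) (cursor y), hx.1, hy.1]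
  · have hcx : |cursor x| ≤ m := le_of_add_le_of_nonneg_left hx.1 (l1Norm_nonneg _)
    rw [lamps_mul] at hd
    rcases Finset.mem_union.mp (support_add hd) with hd | hd
    · push_cast
      linarith [hx.2 d hd]
    · rw [mem_support_iff, smul_apply] at hd
      have := hy.2 (d - cursor x) (mem_support_iff.mpr hd)
      have := abs_sub_abs_le_abs_sub d (cursor x)
      push_cast
      linarith

/-- After translating by the cursor of `x`, the lamps of `x⁻¹` lie in `(-k, k)`, the lamp `z` sits
at `k` and the lamps of `y` lie in `(k, 3k)`, so nothing cancels. -/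
theorem l1Norm_lamps_sandwich {k : ℕ} {x y : ZWreathZ}
    (hx : ∀ d ∈ (lamps x).support, |d| < k) (hy : ∀ d ∈ (lamps y).support, |d| < k) (z : ℤ) :
    l1Norm (lamps (x⁻¹ * (inr (ofAdd (k : ℤ)) *
      (inl (ofAdd (single 0 z)) * (inr (ofAdd (k : ℤ)) * y))))) =
      l1Norm (lamps x) + |z| + l1Norm (lamps y) := by
  have hV : lamps (inr (ofAdd (k : ℤ)) * (inl (ofAdd (single 0 z)) * (inr (ofAdd (k : ℤ)) * y))) =
      single (k : ℤ) z + ofAdd (2 * k : ℤ) • lamps y := by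
    simp [comapSMul_single, smul_smul, ← ofAdd_add, two_mul]
  have hx' : ∀ d ∈ (-lamps x).support, d < k := fun d hd =>
    (le_abs_self d).trans_lt (hx d (support_neg (lamps x) ▸ hd))
  have hy' : ∀ d ∈ (ofAdd (2 * k : ℤ) • lamps y).support, (k : ℤ) < d := by
    intro d hd
    rw [mem_support_iff, smul_apply, toAdd_ofAdd] at hd
    linarith [neg_abs_le (d - 2 * k), hy _ (mem_support_iff.mpr hd)]
  have hk : ∀ d ∈ (single (k : ℤ) z).support, d = k := fun d hd =>
    Finset.mem_singleton.mp (support_single_subset hd)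
  rw [lamps_inv_mul, l1Norm_smul, hV, sub_eq_neg_add,
    l1Norm_add_of_lt_of_le hx' fun d hd => ?_, l1Norm_neg,
    l1Norm_add_of_lt_of_le (m := (k : ℤ) + 1) (fun d hd => by simp [hk d hd]) fun d hd => hy' d hd,
    l1Norm_single, l1Norm_smul, add_assoc]
  rcases Finset.mem_union.mp (support_add hd) with hd | hd
  · exact (hk d hd).ge
  · exact (hy' d hd).le

noncomputable def ofFreeGroup : FreeGroup Bool →* ZWreathZ :=
  FreeGroup.lift fun i => if i then inr (ofAdd 1) else inl (ofAdd (single 0 1))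

theorem ofFreeGroup_fa_pow (n : ℕ) : ofFreeGroup (fa ^ n) = inr (ofAdd (n : ℤ)) := by
  rw [map_pow, show ofFreeGroup fa = inr (ofAdd 1) from FreeGroup.lift_apply_of, ← map_pow,
    ← ofAdd_nsmul, nsmul_one]

theorem ofFreeGroup_fb_zpow (z : ℤ) : ofFreeGroup (fb ^ z) = inl (ofAdd (single 0 z)) := by
  rw [map_zpow, show ofFreeGroup fb = inl (ofAdd (single 0 1)) from FreeGroup.lift_apply_of,
    ← map_zpow, ← ofAdd_zsmul, smul_single_one]

theorem isBoundedBy_ofFreeGroup (g : FreeGroup Bool) : IsBoundedBy (ofFreeGroup g) g.norm := by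
  refine FreeGroup.norm_induction (P := fun g n => IsBoundedBy (ofFreeGroup g) n) ?_ ?_ ?_ ?_ g
  · simpa using isBoundedBy_one
  · rintro (_ | _)
    · simpa [ofFreeGroup] using isBoundedBy_inl_single (v := 1) le_rfl
    · simpa [ofFreeGroup] using isBoundedBy_inr (s := 1) le_rfl
  · rintro (_ | _)
    · simpa [ofFreeGroup] using isBoundedBy_inl_single (v := -1) (by norm_num)
    · simpa [ofFreeGroup] using isBoundedBy_inr (s := -1) (by norm_num)
  · exact fun g h m n hg hh => by simpa only [map_mul] using hg.mul hh

theorem cursor_ofFreeGroup (g : FreeGroup Bool) : cursor (ofFreeGroup g) = toAdd (expA g) := by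
  have : rightHom.comp ofFreeGroup = expA := by
    ext (_ | _) <;> simp [ofFreeGroup, expA]
  exact congrArg toAdd (DFunLike.congr_fun this g)

theorem degree_lamps_ofFreeGroup (g : FreeGroup Bool) :
    degree (lamps (ofFreeGroup g)) = toAdd (expB g) := by
  have : lampSum.comp ofFreeGroup = expB := by
    ext (_ | _) <;> simp [ofFreeGroup, expB, lampSum]
  exact congrArg toAdd (DFunLike.congr_fun this g)

theorem abs_toAdd_expB_le (g : FreeGroup Bool) :
    |toAdd (expB g)| ≤ l1Norm (lamps (ofFreeGroup g)) :=
  degree_lamps_ofFreeGroup g ▸ abs_degree_le_l1Norm _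

end ZWreathZ

open ZWreathZ

theorem stmt15_general (k : ℕ) (r₁ r₂ : FreeGroup Bool)
    (h₁ : r₁.norm ≤ k) (h₂ : r₂.norm ≤ k)
    (x₁ x₂ y₁ y₂ : ℤ)
    (hx₁ : expA r₁ = Multiplicative.ofAdd x₁) (hx₂ : expA r₂ = Multiplicative.ofAdd x₂)
    (hy₁ : expB r₁ = Multiplicative.ofAdd y₁) (hy₂ : expB r₂ = Multiplicative.ofAdd y₂) :
    (4 * k + ((k : ℤ) - x₁ + |y₁|) + ((k : ℤ) + x₂ + |y₂|) ≤
      ((r₁⁻¹ * fa ^ k * fb ^ (-(4 * k : ℤ)) * fa ^ k * r₂).norm : ℤ)) ∧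
    (6 * (k : ℤ) - x₁ + x₂ + |y₁| + |y₂| ≤
      ((r₁⁻¹ * fa ^ k * fb ^ (-(4 * k : ℤ)) * fa ^ k * r₂).norm : ℤ)) := by
  set w := r₁⁻¹ * fa ^ k * fb ^ (-(4 * k : ℤ)) * fa ^ k * r₂
  have hw : ofFreeGroup w = (ofFreeGroup r₁)⁻¹ * (inr (ofAdd (k : ℤ)) *
      (inl (ofAdd (single 0 (-(4 * k : ℤ)))) * (inr (ofAdd (k : ℤ)) * ofFreeGroup r₂))) := by
    simp only [w, map_mul, map_inv, ofFreeGroup_fa_pow, ofFreeGroup_fb_zpow, mul_assoc]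
  have hcursor : cursor (ofFreeGroup w) = 2 * k - x₁ + x₂ := by
    simp [hw, cursor_ofFreeGroup, hx₁, hx₂]
    ring
  have hlamps : l1Norm (lamps (ofFreeGroup w)) =
      l1Norm (lamps (ofFreeGroup r₁)) + 4 * k + l1Norm (lamps (ofFreeGroup r₂)) := by
    rw [hw, l1Norm_lamps_sandwich ((isBoundedBy_ofFreeGroup r₁).mono h₁).2
      ((isBoundedBy_ofFreeGroup r₂).mono h₂).2, abs_neg, abs_of_nonneg (by positivity)]
  have hy₁' := abs_toAdd_expB_le r₁
  have hy₂' := abs_toAdd_expB_le r₂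
  rw [hy₁, toAdd_ofAdd] at hy₁'
  rw [hy₂, toAdd_ofAdd] at hy₂'
  have hnorm := (isBoundedBy_ofFreeGroup w).1
  rw [hcursor, hlamps] at hnorm
  have := le_abs_self (2 * k - x₁ + x₂ : ℤ)
  constructor <;> linarith

/-- For reduced words r₁, r₂ of length at most k (k ≥ 1), the length of
r₁⁻¹·aᵏ·b⁻⁴ᵏ·aᵏ·r₂ is at least 4k + (k - x₁ + |y₁|) + (k + x₂ + |y₂|), hence
at least 6k - x₁ + x₂ + |y₁| + |y₂|, where xᵢ, yᵢ are the a- and b-exponent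
sums of rᵢ. -/
theorem stmt15 (k : ℕ) (hk : 1 ≤ k) (r₁ r₂ : FreeGroup Bool)
    (h₁ : r₁.norm ≤ k) (h₂ : r₂.norm ≤ k)
    (x₁ x₂ y₁ y₂ : ℤ)
    (hx₁ : expA r₁ = Multiplicative.ofAdd x₁) (hx₂ : expA r₂ = Multiplicative.ofAdd x₂)
    (hy₁ : expB r₁ = Multiplicative.ofAdd y₁) (hy₂ : expB r₂ = Multiplicative.ofAdd y₂) :
    (4 * k + ((k : ℤ) - x₁ + |y₁|) + ((k : ℤ) + x₂ + |y₂|) ≤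
      ((r₁⁻¹ * fa ^ k * fb ^ (-(4 * k : ℤ)) * fa ^ k * r₂).norm : ℤ)) ∧
    (6 * (k : ℤ) - x₁ + x₂ + |y₁| + |y₂| ≤
      ((r₁⁻¹ * fa ^ k * fb ^ (-(4 * k : ℤ)) * fa ^ k * r₂).norm : ℤ)) :=
  stmt15_general k r₁ r₂ h₁ h₂ x₁ x₂ y₁ y₂ hx₁ hx₂ hy₁ hy₂
end

section
/- In P = F₂ × ℤ = ⟨a,b,c | ac=ca, bc=cb⟩ with word length over {a,b,c}, for k ≥ 1 and elements g₁ = c^{z₁}·r₁, g₂ = c^{z₂}·r₂ with r₁, r₂ ∈ F₂ of length at most k, the word length of g₁⁻¹ · aᵏb⁻⁴ᵏaᵏ · g₂ is at least 6k - x₁ + x₂ + |y₁| + |y₂| + |z₁ - z₂|, where xᵢ, yᵢ are the a- and b-exponent sums of rᵢ. -/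
/-- The word length of `g` with respect to a generating set `S`. -/
noncomputable def wordLength {G : Type*} [Group G] (S : Set G) (g : G) : ℕ :=
  sInf {n | ∃ l : List G, l.length = n ∧ (∀ x ∈ l, x ∈ S ∨ x⁻¹ ∈ S) ∧ l.prod = g}

/-- The group P = F₂ × ℤ. -/
abbrev P : Type := FreeGroup Bool × Multiplicative ℤ

/-- The generator a of F₂, viewed in P. -/
def pa : P := (FreeGroup.of true, 1)
/-- The generator b of F₂, viewed in P. -/
def pb : P := (FreeGroup.of false, 1)
/-- The generator c of ℤ, viewed in P. -/
def pc : P := (1, Multiplicative.ofAdd 1)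

section Aux
open FreeGroup List

/-- The no-cancellation relation between adjacent letters. -/
def Rd (p q : Bool × Bool) : Prop := ¬(p.1 = q.1 ∧ p.2 = !q.2)

lemma chain'_reduce (L : List (Bool × Bool)) : List.IsChain Rd (reduce L) := by
  induction L with
  | nil => simp
  | cons x L ih =>
    rw [reduce.cons]
    cases h : reduce L with
    | nil => simp
    | cons hd tl =>
      rw [h] at ih
      by_cases hc : x.1 = hd.1 ∧ x.2 = !hd.2
      · simpa [hc] using ih.tail
      · simpa [hc, List.isChain_cons_cons] using ⟨hc, ih⟩

lemma chain'_toWord (g : FreeGroup Bool) : List.IsChain Rd g.toWord := by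
  rw [← FreeGroup.reduce_toWord]
  exact chain'_reduce _

lemma reduce_eq_self {L : List (Bool × Bool)} (h : List.IsChain Rd L) : reduce L = L := by
  induction L with
  | nil => rfl
  | cons x L ih =>
    rw [reduce.cons, ih h.tail]
    cases L with
    | nil => rfl
    | cons hd tl =>
      have hr : Rd x hd := (List.isChain_cons_cons.1 h).1
      simp [Rd] at hr
      by_cases h1 : x.1 = hd.1
      · simp [h1, hr h1]
      · simp [h1]

lemma toWord_mk_eq {L : List (Bool × Bool)} (h : List.IsChain Rd L) :
    (FreeGroup.mk L).toWord = L := by rw [toWord_mk, reduce_eq_self h]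

lemma mk_replicate (p : Bool × Bool) (n : ℕ) :
    FreeGroup.mk (List.replicate n p) = (FreeGroup.mk [p]) ^ n := by
  induction n with
  | zero => simp [FreeGroup.one_eq_mk]
  | succ n ih => rw [pow_succ', List.replicate_succ, ← ih, FreeGroup.mul_mk]; rfl

lemma chain'_replicate (p : Bool × Bool) (n : ℕ) :
    List.IsChain Rd (List.replicate n p) :=
  List.isChain_replicate_of_rel n (by simp [Rd])

lemma inv_mk_singleton (p : Bool × Bool) :
    (FreeGroup.mk [p])⁻¹ = FreeGroup.mk [(p.1, !p.2)] := by
  rw [FreeGroup.inv_mk]; simp [FreeGroup.invRev]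

/-- If `|r| ≤ k` then `p^k * r` is trivial or its reduced word starts with `p`. -/
lemma pow_mul_head (p : Bool × Bool) :
    ∀ (k : ℕ) (r : FreeGroup Bool), r.norm ≤ k →
      (FreeGroup.mk [p]) ^ k * r = 1 ∨
        ∃ L, ((FreeGroup.mk [p]) ^ k * r).toWord = p :: L := by
  intro k
  induction k with
  | zero =>
    intro r hr
    left
    rw [pow_zero, one_mul, ← FreeGroup.norm_eq_zero]
    omega
  | succ k ih =>
    intro r hr
    cases h : r.toWord with
    | nil =>
      right
      have hr1 : r = 1 := FreeGroup.toWord_eq_nil_iff.1 h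
      refine ⟨List.replicate k p, ?_⟩
      rw [hr1, mul_one, ← mk_replicate, toWord_mk_eq (chain'_replicate p _)]
      rfl
    | cons f T =>
      by_cases hf : f = (p.1, !p.2)
      · -- r = p⁻¹ * r'
        have hchain : List.IsChain Rd (f :: T) := h ▸ chain'_toWord r
        have hrT : r = (FreeGroup.mk [p])⁻¹ * FreeGroup.mk T := by
          rw [inv_mk_singleton, ← hf, FreeGroup.mul_mk, List.singleton_append, ← h, FreeGroup.mk_toWord]
        have hnT : (FreeGroup.mk T).norm ≤ k := by
          have : (FreeGroup.mk T).toWord = T := toWord_mk_eq hchain.tail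
          have hlen : r.norm = T.length + 1 := by
            unfold FreeGroup.norm; rw [h]; simp
          unfold FreeGroup.norm
          rw [this]
          omega
        have := ih (FreeGroup.mk T) hnT
        rw [hrT, pow_succ, mul_assoc, mul_inv_cancel_left] at *
        exact this
      · -- no cancellation
        right
        have hchain : List.IsChain Rd (List.replicate (k+1) p ++ r.toWord) := by
          apply List.isChain_append.2
          refine ⟨chain'_replicate p _, chain'_toWord r, ?_⟩
          intro x hx y hy
          have hxp : x = p := by
            rw [List.getLast?_replicate] at hx
            exact (by simpa using hx : p = x).symm
          have hyf : y = f := by rw [h] at hy; exact (by simpa using hy : f = y).symm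
          subst hxp hyf
          intro ⟨h1, h2⟩
          exact hf (Prod.ext h1.symm (by simp [h2]))
        have : (FreeGroup.mk [p]) ^ (k+1) * r =
            FreeGroup.mk (List.replicate (k+1) p ++ r.toWord) := by
          rw [← FreeGroup.mul_mk, mk_replicate, FreeGroup.mk_toWord]
        rw [this, toWord_mk_eq hchain]
        exact ⟨List.replicate k p ++ r.toWord, rfl⟩


lemma expLetter (x d : Bool) :
    |Multiplicative.toAdd (expA (FreeGroup.mk [(x, d)]))| +
    |Multiplicative.toAdd (expB (FreeGroup.mk [(x, d)]))| = 1 := by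
  cases d
  · have : (FreeGroup.of x)⁻¹ = FreeGroup.mk [(x, false)] := by
      show (FreeGroup.mk [(x, true)])⁻¹ = _
      rw [FreeGroup.inv_mk]; simp [FreeGroup.invRev]
    rw [← this]
    cases x <;> simp [expA, expB]
  · have : FreeGroup.mk [(x, true)] = FreeGroup.of x := rfl
    rw [this]
    cases x <;> simp [expA, expB]

lemma expBound_list (L : List (Bool × Bool)) :
    |Multiplicative.toAdd (expA (FreeGroup.mk L))| +
    |Multiplicative.toAdd (expB (FreeGroup.mk L))| ≤ (L.length : ℤ) := by
  induction L with
  | nil =>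
    have : FreeGroup.mk ([] : List (Bool × Bool)) = 1 := FreeGroup.one_eq_mk.symm
    simp [this]
  | cons x L ih =>
    have hmk : FreeGroup.mk (x :: L) = FreeGroup.mk [x] * FreeGroup.mk L := by
      rw [FreeGroup.mul_mk]; rfl
    have hA := abs_add_le (Multiplicative.toAdd (expA (FreeGroup.mk [x])))
      (Multiplicative.toAdd (expA (FreeGroup.mk L)))
    have hB := abs_add_le (Multiplicative.toAdd (expB (FreeGroup.mk [x])))
      (Multiplicative.toAdd (expB (FreeGroup.mk L)))
    have hx := expLetter x.1 x.2
    simp only [hmk, _root_.map_mul, toAdd_mul]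
    simp only [List.length_cons]
    push_cast
    have : (x.1, x.2) = x := rfl
    rw [this] at hx
    linarith

lemma expBound (g : FreeGroup Bool) :
    |Multiplicative.toAdd (expA g)| + |Multiplicative.toAdd (expB g)| ≤ (g.norm : ℤ) := by
  have := expBound_list g.toWord
  rwa [FreeGroup.mk_toWord] at this

lemma invRev_cons (p : Bool × Bool) (L : List (Bool × Bool)) :
    FreeGroup.invRev (p :: L) = FreeGroup.invRev L ++ [(p.1, !p.2)] := by
  simp [FreeGroup.invRev]

lemma tail_form (k : ℕ) (r : FreeGroup Bool) (hr : r.norm ≤ k) :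
    r⁻¹ * (FreeGroup.of true) ^ k = 1 ∨
      ∃ L, (r⁻¹ * (FreeGroup.of true) ^ k).toWord = L ++ [(true, true)] := by
  have hmk : FreeGroup.mk [((true : Bool), false)] = (FreeGroup.of true)⁻¹ := by
    have : (FreeGroup.of true)⁻¹ = FreeGroup.mk [((true : Bool), false)] := by
      show (FreeGroup.mk [((true : Bool), true)])⁻¹ = _
      rw [FreeGroup.inv_mk]; simp [FreeGroup.invRev]
    exact this.symm
  have key := pow_mul_head ((true : Bool), false) k r hr
  rw [hmk] at key
  have hinv : (r⁻¹ * (FreeGroup.of true) ^ k)⁻¹ = ((FreeGroup.of true)⁻¹) ^ k * r := by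
    group
  rcases key with h1 | ⟨L, hL⟩
  · left
    rw [← inv_inv (r⁻¹ * (FreeGroup.of true) ^ k), hinv, h1, inv_one]
  · right
    refine ⟨FreeGroup.invRev L, ?_⟩
    have := FreeGroup.toWord_inv (((FreeGroup.of true)⁻¹) ^ k * r)
    rw [← hinv, inv_inv] at this
    rw [this, hinv, hL, _root_.invRev_cons]
    rfl

lemma head_form (k : ℕ) (r : FreeGroup Bool) (hr : r.norm ≤ k) :
    (FreeGroup.of true) ^ k * r = 1 ∨
      ∃ L, ((FreeGroup.of true) ^ k * r).toWord = (true, true) :: L := by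
  have key := pow_mul_head ((true : Bool), true) k r hr
  exact key

lemma norm_w_lower (k : ℕ) (hk : 1 ≤ k) (r₁ r₂ : FreeGroup Bool)
    (h₁ : r₁.norm ≤ k) (h₂ : r₂.norm ≤ k) :
    6 * (k : ℤ) - Multiplicative.toAdd (expA r₁) + Multiplicative.toAdd (expA r₂)
      + |Multiplicative.toAdd (expB r₁)| + |Multiplicative.toAdd (expB r₂)| ≤
    ((r₁⁻¹ * (FreeGroup.of true) ^ k * ((FreeGroup.of false)⁻¹) ^ (4 * k)
        * (FreeGroup.of true) ^ k * r₂).norm : ℤ) := by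
  set u := r₁⁻¹ * (FreeGroup.of true) ^ k with hu
  set s := (FreeGroup.of true) ^ k * r₂ with hs
  have hmkb : FreeGroup.mk [((false : Bool), false)] = (FreeGroup.of false)⁻¹ := by
    have : (FreeGroup.of false)⁻¹ = FreeGroup.mk [((false : Bool), false)] := by
      show (FreeGroup.mk [((false : Bool), true)])⁻¹ = _
      rw [FreeGroup.inv_mk]; simp [FreeGroup.invRev]
    exact this.symm
  obtain ⟨m, hm⟩ : ∃ m, 4 * k = m + 1 := ⟨4 * k - 1, by omega⟩
  -- the concatenated word is reduced
  have hchain : List.IsChain Rd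
      (u.toWord ++ (List.replicate (4 * k) ((false : Bool), false) ++ s.toWord)) := by
    apply List.isChain_append.2
    refine ⟨chain'_toWord u, ?_, ?_⟩
    · apply List.isChain_append.2
      refine ⟨chain'_replicate _ _, chain'_toWord s, ?_⟩
      intro x hx y hy
      have hxv : x = ((false : Bool), false) := by
        rw [List.getLast?_replicate] at hx
        have : ¬ (4 * k = 0) := by omega
        simp [this] at hx
        exact hx.symm
      rcases head_form k r₂ h₂ with h1 | ⟨L, hL⟩
      · rw [← hs] at h1
        rw [h1] at hy
        simp [FreeGroup.toWord_one] at hy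
      · rw [← hs] at hL
        rw [hL] at hy
        simp at hy
        rw [hxv, ← hy]
        simp [Rd]
    · intro x hx y hy
      rcases tail_form k r₁ h₁ with h1 | ⟨L, hL⟩
      · rw [← hu] at h1
        rw [h1] at hx
        simp [FreeGroup.toWord_one] at hx
      · rw [← hu] at hL
        rw [hL] at hx
        rw [List.getLast?_concat] at hx
        have hxv : x = ((true : Bool), true) := by simpa using hx.symm
        have hyv : y = ((false : Bool), false) := by
          rw [hm, List.replicate_succ] at hy
          simp at hy
          exact hy.symm
        rw [hxv, hyv]; simp [Rd]
  have hW : (u * ((FreeGroup.of false)⁻¹) ^ (4 * k) * s).toWord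
      = u.toWord ++ (List.replicate (4 * k) ((false : Bool), false) ++ s.toWord) := by
    have : u * ((FreeGroup.of false)⁻¹) ^ (4 * k) * s =
        FreeGroup.mk (u.toWord ++ (List.replicate (4 * k) ((false : Bool), false) ++ s.toWord)) := by
      rw [← FreeGroup.mul_mk, ← FreeGroup.mul_mk, mk_replicate, hmkb,
        FreeGroup.mk_toWord, FreeGroup.mk_toWord, mul_assoc]
    rw [this, toWord_mk_eq hchain]
  have hnorm : (u * ((FreeGroup.of false)⁻¹) ^ (4 * k) * s).norm
      = u.norm + 4 * k + s.norm := by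
    unfold FreeGroup.norm
    rw [hW]
    simp
    omega
  -- exponent computations
  have hAu : Multiplicative.toAdd (expA u) = (k : ℤ) - Multiplicative.toAdd (expA r₁) := by
    rw [hu]
    simp only [_root_.map_mul, _root_.map_inv, _root_.map_pow, toAdd_mul, toAdd_inv, toAdd_pow]
    have : expA (FreeGroup.of true) = Multiplicative.ofAdd 1 := by
      simp [expA]
    rw [this]
    simp
    ring
  have hBu : Multiplicative.toAdd (expB u) = - Multiplicative.toAdd (expB r₁) := by
    rw [hu]
    simp only [_root_.map_mul, _root_.map_inv, _root_.map_pow, toAdd_mul, toAdd_inv, toAdd_pow]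
    have : expB (FreeGroup.of true) = 1 := by simp [expB]
    rw [this]
    simp
  have hAs : Multiplicative.toAdd (expA s) = (k : ℤ) + Multiplicative.toAdd (expA r₂) := by
    rw [hs]
    simp only [_root_.map_mul, _root_.map_pow, toAdd_mul, toAdd_pow]
    have : expA (FreeGroup.of true) = Multiplicative.ofAdd 1 := by simp [expA]
    rw [this]
    simp
  have hBs : Multiplicative.toAdd (expB s) = Multiplicative.toAdd (expB r₂) := by
    rw [hs]
    simp only [_root_.map_mul, _root_.map_pow, toAdd_mul, toAdd_pow]
    have : expB (FreeGroup.of true) = 1 := by simp [expB]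
    rw [this]
    simp
  have hu' := expBound u
  have hs' := expBound s
  rw [hAu, hBu, hAs, hBs] at *
  have h1 : (k : ℤ) - Multiplicative.toAdd (expA r₁) ≤ |(k : ℤ) - Multiplicative.toAdd (expA r₁)| :=
    le_abs_self _
  have h2 : (k : ℤ) + Multiplicative.toAdd (expA r₂) ≤ |(k : ℤ) + Multiplicative.toAdd (expA r₂)| :=
    le_abs_self _
  have hfin : r₁⁻¹ * (FreeGroup.of true) ^ k * ((FreeGroup.of false)⁻¹) ^ (4 * k)
        * (FreeGroup.of true) ^ k * r₂ = u * ((FreeGroup.of false)⁻¹) ^ (4 * k) * s := by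
    rw [hu, hs]; group
  rw [hfin, hnorm]
  push_cast
  rw [abs_neg] at hu'
  linarith


lemma pletter_bound (x : P) (hx : x ∈ ({pa, pb, pc} : Set P) ∨ x⁻¹ ∈ ({pa, pb, pc} : Set P)) :
    (x.1.norm : ℤ) + |Multiplicative.toAdd x.2| ≤ 1 := by
  have hone : ((1 : FreeGroup Bool).norm : ℤ) = 0 := by
    simp [FreeGroup.norm_one]
  rcases hx with hx | hx <;>
    simp only [Set.mem_insert_iff, Set.mem_singleton_iff] at hx
  · rcases hx with rfl | rfl | rfl <;>
      simp [pa, pb, pc, FreeGroup.norm_of]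
  · rcases hx with h | h | h
    · have : x = pa⁻¹ := by rw [← h, inv_inv]
      subst this
      simp [pa, Prod.fst_inv, Prod.snd_inv, FreeGroup.norm_inv_eq, FreeGroup.norm_of]
    · have : x = pb⁻¹ := by rw [← h, inv_inv]
      subst this
      simp [pb, FreeGroup.norm_inv_eq, FreeGroup.norm_of]
    · have : x = pc⁻¹ := by rw [← h, inv_inv]
      subst this
      simp [pc, FreeGroup.norm_inv_eq]

lemma list_bound (l : List P) (h : ∀ x ∈ l, x ∈ ({pa, pb, pc} : Set P) ∨ x⁻¹ ∈ ({pa, pb, pc} : Set P)) :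
    (l.prod.1.norm : ℤ) + |Multiplicative.toAdd l.prod.2| ≤ (l.length : ℤ) := by
  induction l with
  | nil => simp [FreeGroup.norm_one]
  | cons x l ih =>
    have hx := pletter_bound x (h x (by simp))
    have hl := ih (fun y hy => h y (by simp [hy]))
    have hmul : (x :: l).prod = x * l.prod := List.prod_cons
    rw [hmul]
    have hn : ((x * l.prod).1.norm : ℤ) ≤ (x.1.norm : ℤ) + (l.prod.1.norm : ℤ) := by
      have := FreeGroup.norm_mul_le x.1 l.prod.1
      exact_mod_cast this
    have ht : |Multiplicative.toAdd (x * l.prod).2| ≤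
        |Multiplicative.toAdd x.2| + |Multiplicative.toAdd l.prod.2| := by
      have : (x * l.prod).2 = x.2 * l.prod.2 := rfl
      rw [this, toAdd_mul]
      exact abs_add_le _ _
    simp only [List.length_cons]
    push_cast
    linarith

lemma mk_letter_mem (p : Bool × Bool) :
    ((FreeGroup.mk [p], 1) : P) ∈ ({pa, pb, pc} : Set P) ∨
      ((FreeGroup.mk [p], 1) : P)⁻¹ ∈ ({pa, pb, pc} : Set P) := by
  obtain ⟨x, d⟩ := p
  cases d
  · right
    have h1 : ((FreeGroup.mk [(x, false)], 1) : P)⁻¹ = ((FreeGroup.mk [(x, true)], 1) : P) := by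
      have : (FreeGroup.mk [(x, false)])⁻¹ = FreeGroup.mk [(x, true)] := by
        rw [FreeGroup.inv_mk]; simp [FreeGroup.invRev]
      rw [Prod.inv_mk] at *
      · exact Prod.ext this (by simp)
    rw [h1]
    cases x
    · right; left; rfl
    · left; rfl
  · cases x
    · left; right; left; rfl
    · left; left; rfl

lemma exists_word (w : FreeGroup Bool) (m : ℤ) :
    ∃ l : List P, (∀ x ∈ l, x ∈ ({pa, pb, pc} : Set P) ∨ x⁻¹ ∈ ({pa, pb, pc} : Set P)) ∧
      l.prod = ((w, Multiplicative.ofAdd m) : P) := by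
  refine ⟨(w.toWord.map fun p => ((FreeGroup.mk [p], 1) : P)) ++
    List.replicate m.natAbs (if 0 ≤ m then pc else pc⁻¹), ?_, ?_⟩
  · intro x hx
    rw [List.mem_append] at hx
    rcases hx with hx | hx
    · rw [List.mem_map] at hx
      obtain ⟨p, _, rfl⟩ := hx
      exact mk_letter_mem p
    · have := List.eq_of_mem_replicate hx
      subst this
      by_cases hm : 0 ≤ m
      · simp only [if_pos hm]; left; right; right; rfl
      · simp only [if_neg hm]; right
        rw [inv_inv]; right; right; rfl
  · rw [List.prod_append, List.prod_replicate]
    have h1 : ∀ L : List (Bool × Bool),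
        (L.map fun p => ((FreeGroup.mk [p], 1) : P)).prod = ((FreeGroup.mk L, 1) : P) := by
      intro L
      induction L with
      | nil => simp [Prod.ext_iff, FreeGroup.one_eq_mk]
      | cons p L ih =>
        rw [List.map_cons, List.prod_cons, ih, Prod.mk_mul_mk, FreeGroup.mul_mk]
        simp
    rw [h1, FreeGroup.mk_toWord]
    have h2 : (if 0 ≤ m then pc else pc⁻¹) ^ m.natAbs = ((1, Multiplicative.ofAdd m) : P) := by
      have hpc : ∀ n : ℕ, (pc : P) ^ n = ((1, Multiplicative.ofAdd (n : ℤ)) : P) := by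
        intro n
        rw [pc, Prod.pow_mk]
        refine Prod.ext (one_pow n) ?_
        rw [← ofAdd_nsmul]
        simp
      by_cases hm : 0 ≤ m
      · rw [if_pos hm, hpc, Int.natAbs_of_nonneg hm]
      · rw [if_neg hm, inv_pow, hpc]
        rw [Prod.inv_mk]
        refine Prod.ext (by simp) ?_
        simp only [← ofAdd_neg]
        congr 1
        omega
    rw [h2, Prod.mk_mul_mk, mul_one, one_mul]

lemma wordLength_lower (w : FreeGroup Bool) (m : ℤ) :
    (w.norm : ℤ) + |m| ≤ (wordLength {pa, pb, pc} ((w, Multiplicative.ofAdd m) : P) : ℤ) := by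
  obtain ⟨l, hl, hp⟩ := exists_word w m
  have hne : {n | ∃ l : List P, l.length = n ∧
      (∀ x ∈ l, x ∈ ({pa, pb, pc} : Set P) ∨ x⁻¹ ∈ ({pa, pb, pc} : Set P)) ∧
      l.prod = ((w, Multiplicative.ofAdd m) : P)}.Nonempty :=
    ⟨l.length, l, rfl, hl, hp⟩
  obtain ⟨l', hl'len, hl'mem, hl'prod⟩ := Nat.sInf_mem hne
  rw [wordLength, ← hl'len]
  have := list_bound l' hl'mem
  rw [hl'prod] at this
  simpa using this

end Aux

/-- In P = F₂ × ℤ with generators {a,b,c}, for k ≥ 1 and g₁ = c^{z₁}r₁,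
g₂ = c^{z₂}r₂ with |r₁|, |r₂| ≤ k, the word length of g₁⁻¹·aᵏb⁻⁴ᵏaᵏ·g₂ is at
least 6k - x₁ + x₂ + |y₁| + |y₂| + |z₁ - z₂|. -/
theorem stmt16 (k : ℕ) (hk : 1 ≤ k) (r₁ r₂ : FreeGroup Bool) (z₁ z₂ : ℤ)
    (h₁ : r₁.norm ≤ k) (h₂ : r₂.norm ≤ k)
    (x₁ x₂ y₁ y₂ : ℤ)
    (hx₁ : expA r₁ = Multiplicative.ofAdd x₁) (hx₂ : expA r₂ = Multiplicative.ofAdd x₂)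
    (hy₁ : expB r₁ = Multiplicative.ofAdd y₁) (hy₂ : expB r₂ = Multiplicative.ofAdd y₂) :
    6 * (k : ℤ) - x₁ + x₂ + |y₁| + |y₂| + |z₁ - z₂| ≤
      (wordLength {pa, pb, pc}
        (((r₁, Multiplicative.ofAdd z₁) : P)⁻¹ *
          (pa ^ k * pb ^ (-(4 * k : ℤ)) * pa ^ k) *
          ((r₂, Multiplicative.ofAdd z₂) : P)) : ℤ) := by
  have hpa : pa ^ k = (((FreeGroup.of true) ^ k, 1) : P) := by
    rw [pa, Prod.pow_mk, one_pow]
  have hpb : pb ^ (-(4 * k : ℤ)) = ((((FreeGroup.of false)⁻¹) ^ (4 * k), 1) : P) := by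
    have h1 : pb ^ (-(4 * k : ℤ)) = (pb ^ (4 * k))⁻¹ := by
      rw [← zpow_natCast pb (4 * k), ← zpow_neg]
      norm_num
    rw [h1, pb, Prod.pow_mk, Prod.inv_mk, inv_pow]
    refine Prod.ext rfl (by simp)
  have hinv1 : ((r₁, Multiplicative.ofAdd z₁) : P)⁻¹ = ((r₁⁻¹, Multiplicative.ofAdd (-z₁)) : P) := by
    rw [Prod.inv_mk, ofAdd_neg]
  have hbig : ((r₁, Multiplicative.ofAdd z₁) : P)⁻¹ *
      (pa ^ k * pb ^ (-(4 * k : ℤ)) * pa ^ k) *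
      ((r₂, Multiplicative.ofAdd z₂) : P) =
      ((r₁⁻¹ * (FreeGroup.of true) ^ k * ((FreeGroup.of false)⁻¹) ^ (4 * k)
        * (FreeGroup.of true) ^ k * r₂, Multiplicative.ofAdd (z₂ - z₁)) : P) := by
    rw [hpa, hpb, hinv1, Prod.mk_mul_mk, Prod.mk_mul_mk, Prod.mk_mul_mk, Prod.mk_mul_mk]
    refine Prod.ext ?_ ?_
    · show r₁⁻¹ * ((FreeGroup.of true) ^ k * ((FreeGroup.of false)⁻¹) ^ (4 * k)
        * (FreeGroup.of true) ^ k) * r₂ = _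
      group
    · show Multiplicative.ofAdd (-z₁) * (1 * 1 * 1) * Multiplicative.ofAdd z₂ = _
      simp only [mul_one, one_mul, ← ofAdd_add]
      congr 1
      ring
  rw [hbig]
  have hWL := wordLength_lower (r₁⁻¹ * (FreeGroup.of true) ^ k * ((FreeGroup.of false)⁻¹) ^ (4 * k)
        * (FreeGroup.of true) ^ k * r₂) (z₂ - z₁)
  have hN := norm_w_lower k hk r₁ r₂ h₁ h₂
  have hxa : Multiplicative.toAdd (expA r₁) = x₁ := by rw [hx₁]; rfl
  have hxb : Multiplicative.toAdd (expA r₂) = x₂ := by rw [hx₂]; rfl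
  have hya : Multiplicative.toAdd (expB r₁) = y₁ := by rw [hy₁]; rfl
  have hyb : Multiplicative.toAdd (expB r₂) = y₂ := by rw [hy₂]; rfl
  rw [hxa, hxb, hya, hyb] at hN
  have habs : |z₁ - z₂| = |z₂ - z₁| := abs_sub_comm _ _
  linarith
end
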